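/- arXiv:2110.15175 — 4 statements merged into one kernel-verified Lean document; each statement's English description precedes it below -/
import Mathlib

section
/- Let f : X → Y be a nonlinear Fréchet differentiable mapping of Hilbert spaces whose derivative f'_x is Lipschitz with constant L > 0 on a closed ball B_r(a), the linear map f'_a : X → Y is surjective, and ‖(f'_a)*(y)‖ ≥ ν‖y‖ for all y ∈ Y with ν > 0. Then for every ε < min{r, ν/(4L)}, the image f(B_ε(a)) ⊂ Y is convex. -/
/-! For `x₁, x₂ ∈ B_ε(a)` and `xₜ = t • x₁ + u • x₂`, the parallelogram law puts the ball of radius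
`δ = t u ‖x₁ - x₂‖² / (2ε)` around `xₜ` inside `B_ε(a)`, while the Lipschitz bound on `f'` gives
`‖t • f x₁ + u • f x₂ - f xₜ‖ ≤ L t u ‖x₁ - x₂‖² = 2εL δ`. The Gram operator `f'_a (f'_a)*` is
coercive, so by Lax–Milgram `f'_a` has the right inverse `(f'_a)* (f'_a (f'_a)*)⁻¹` of norm at most
`1/ν`; as `f` is `Lε`-close to `f'_a` on `B_ε(a)`, the Graves–Newton iteration shows that `f` maps
`B_δ(xₜ)` onto a superset of `B_{(ν - Lε)δ}(f xₜ)`. This ball contains `t • f x₁ + u • f x₂`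
because `2Lε ≤ ν - Lε`. -/

open Metric Set
open scoped NNReal InnerProductSpace InnerProduct

theorem norm_smul_add_smul_sq {E : Type*} [NormedAddCommGroup E] [InnerProductSpace ℝ E]
    (x y : E) {t u : ℝ} (htu : t + u = 1) :
    ‖t • x + u • y‖ ^ 2 = t * ‖x‖ ^ 2 + u * ‖y‖ ^ 2 - t * u * ‖x - y‖ ^ 2 := by
  rw [norm_add_sq_real, norm_sub_sq_real, norm_smul, norm_smul, real_inner_smul_left,
    real_inner_smul_right, Real.norm_eq_abs, Real.norm_eq_abs, mul_pow, mul_pow, sq_abs, sq_abs]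
  obtain rfl := eq_sub_of_add_eq htu
  ring

theorem closedBall_smul_add_smul_subset {E : Type*} [NormedAddCommGroup E]
    [InnerProductSpace ℝ E] {a x y : E} {ε t u : ℝ} (hε : 0 < ε) (hx : x ∈ closedBall a ε)
    (hy : y ∈ closedBall a ε) (ht : 0 ≤ t) (hu : 0 ≤ u) (htu : t + u = 1) :
    closedBall (t • x + u • y) (t * u * ‖x - y‖ ^ 2 / (2 * ε)) ⊆ closedBall a ε := by
  set d := t * u * ‖x - y‖ ^ 2
  rw [mem_closedBall_iff_norm] at hx hy
  have hsq : ‖t • x + u • y - a‖ ^ 2 ≤ ε ^ 2 - d := by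
    have hxy : t • x + u • y - a = t • (x - a) + u • (y - a) := by
      linear_combination (norm := module) htu • a
    have hd : x - y = (x - a) - (y - a) := (sub_sub_sub_cancel_right x y a).symm
    rw [hxy, norm_smul_add_smul_sq _ _ htu, ← hd]
    have := mul_le_mul_of_nonneg_left (pow_le_pow_left₀ (norm_nonneg _) hx 2) ht
    have := mul_le_mul_of_nonneg_left (pow_le_pow_left₀ (norm_nonneg _) hy 2) hu
    nlinarith
  have hdist : ‖t • x + u • y - a‖ ≤ ε - d / (2 * ε) := by
    have hd : d ≤ ε ^ 2 := by nlinarith [sq_nonneg ‖t • x + u • y - a‖]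
    have hpos : 0 ≤ ε - d / (2 * ε) := by
      rw [sub_nonneg, div_le_iff₀ (by positivity)]; nlinarith
    have hsq' : (ε - d / (2 * ε)) ^ 2 = ε ^ 2 - d + (d / (2 * ε)) ^ 2 := by
      field_simp; ring
    nlinarith [sq_nonneg (d / (2 * ε)), norm_nonneg (t • x + u • y - a)]
  intro z hz
  rw [mem_closedBall_iff_norm] at hz ⊢
  calc ‖z - a‖ ≤ ‖z - (t • x + u • y)‖ + ‖t • x + u • y - a‖ :=
        norm_sub_le_norm_sub_add_norm_sub _ _ _
    _ ≤ ε := by linarith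

section MeanValue

variable {E F : Type*} [NormedAddCommGroup E] [NormedSpace ℝ E] [NormedAddCommGroup F]
  [NormedSpace ℝ F] {f : E → F} {f' : E → E →L[ℝ] F} {s : Set E}

theorem Convex.approximatesLinearOn_of_norm_sub_le (hs : Convex ℝ s)
    (hf : ∀ x ∈ s, HasFDerivWithinAt f (f' x) s x) {φ : E →L[ℝ] F} {c : ℝ≥0}
    (hc : ∀ x ∈ s, ‖f' x - φ‖ ≤ c) : ApproximatesLinearOn f φ s c :=
  fun _ hx _ hy => hs.norm_image_sub_le_of_norm_hasFDerivWithin_le' hf hc hy hx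

variable {K : ℝ≥0}

theorem Convex.norm_image_sub_sub_le_of_lipschitzOnWith (hs : Convex ℝ s)
    (hf : ∀ x ∈ s, HasFDerivWithinAt f (f' x) s x) (hf' : LipschitzOnWith K f' s) {x y : E}
    (hx : x ∈ s) (hy : y ∈ s) : ‖f y - f x - f' x (y - x)‖ ≤ K * ‖y - x‖ ^ 2 := by
  have hseg := hs.inter (convex_closedBall x ‖y - x‖)
  calc ‖f y - f x - f' x (y - x)‖ ≤ K * ‖y - x‖ * ‖y - x‖ :=
        hseg.norm_image_sub_le_of_norm_hasFDerivWithin_le'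
          (fun z hz => (hf z hz.1).mono inter_subset_left)
          (fun z hz => hf'.norm_sub_le_of_le hz.1 hx (mem_closedBall_iff_norm.mp hz.2))
          ⟨hx, mem_closedBall_self (norm_nonneg _)⟩ ⟨hy, mem_closedBall_iff_norm.mpr le_rfl⟩
    _ = K * ‖y - x‖ ^ 2 := by ring

theorem Convex.norm_smul_add_smul_image_sub_le (hs : Convex ℝ s)
    (hf : ∀ x ∈ s, HasFDerivWithinAt f (f' x) s x) (hf' : LipschitzOnWith K f' s) {x y : E}
    (hx : x ∈ s) (hy : y ∈ s) {t u : ℝ} (ht : 0 ≤ t) (hu : 0 ≤ u) (htu : t + u = 1) :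
    ‖t • f x + u • f y - f (t • x + u • y)‖ ≤ K * (t * u * ‖x - y‖ ^ 2) := by
  set z := t • x + u • y
  have hz : z ∈ s := hs hx hy ht hu htu
  have hxz : x - z = u • (x - y) := by
    linear_combination (norm := module) -(htu • x)
  have hyz : y - z = -(t • (x - y)) := by
    linear_combination (norm := module) -(htu • y)
  have hsplit : t • f x + u • f y - f z
      = t • (f x - f z - f' z (x - z)) + u • (f y - f z - f' z (y - z)) := by
    rw [hxz, hyz, map_neg, map_smul, map_smul]
    linear_combination (norm := module) htu • f z
  have hx' : ‖f x - f z - f' z (x - z)‖ ≤ K * (u * ‖x - y‖) ^ 2 :=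
    (hs.norm_image_sub_sub_le_of_lipschitzOnWith hf hf' hz hx).trans_eq
      (by rw [hxz, norm_smul, Real.norm_of_nonneg hu])
  have hy' : ‖f y - f z - f' z (y - z)‖ ≤ K * (t * ‖x - y‖) ^ 2 :=
    (hs.norm_image_sub_sub_le_of_lipschitzOnWith hf hf' hz hy).trans_eq
      (by rw [hyz, norm_neg, norm_smul, Real.norm_of_nonneg ht])
  calc ‖t • f x + u • f y - f z‖
      ≤ t * ‖f x - f z - f' z (x - z)‖ + u * ‖f y - f z - f' z (y - z)‖ := by
        rw [hsplit]
        refine (norm_add_le _ _).trans_eq ?_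
        rw [norm_smul, norm_smul, Real.norm_of_nonneg ht, Real.norm_of_nonneg hu]
    _ ≤ t * (K * (u * ‖x - y‖) ^ 2) + u * (K * (t * ‖x - y‖) ^ 2) := by gcongr
    _ = K * (t * u * ‖x - y‖ ^ 2) := by
        obtain rfl := eq_sub_of_add_eq htu
        ring

end MeanValue

section RightInverse

variable {E F : Type*} [NormedAddCommGroup E] [InnerProductSpace ℝ E] [CompleteSpace E]
  [NormedAddCommGroup F] [InnerProductSpace ℝ F] [CompleteSpace F]

theorem ContinuousLinearMap.exists_rightInverse_of_le_norm_adjoint (A : E →L[ℝ] F) {ν : ℝ}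
    (hν : 0 < ν) (hA : ∀ y, ν * ‖y‖ ≤ ‖(A†) y‖) :
    ∃ g : F →L[ℝ] E, (∀ y, A (g y) = y) ∧ ∀ y, ‖g y‖ ≤ ν⁻¹ * ‖y‖ := by
  set B : F →L[ℝ] F →L[ℝ] ℝ := (innerSL ℝ).bilinearComp (A†) (A†)
  have hB : IsCoercive B := ⟨ν ^ 2, by positivity, fun y => by
    have := mul_self_le_mul_self (by positivity) (hA y)
    simp only [B, bilinearComp_apply, innerSL_apply_apply, real_inner_self_eq_norm_sq]
    linarith⟩
  set Φ := hB.continuousLinearEquivOfBilin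
  have hΦ : ∀ y, A ((A†) y) = Φ y := fun y => ext_inner_right ℝ fun w => by
    simp [Φ, B, adjoint_inner_right]
  refine ⟨(A†) ∘L (Φ.symm : F →L[ℝ] F), fun y => by simp [hΦ], fun y => ?_⟩
  set w := Φ.symm y
  have hsq : ‖(A†) w‖ ^ 2 ≤ ‖y‖ * ‖w‖ := calc
    ‖(A†) w‖ ^ 2 = ⟪y, w⟫_ℝ := by
      rw [← real_inner_self_eq_norm_sq, adjoint_inner_right, hΦ,
        ContinuousLinearEquiv.apply_symm_apply]
    _ ≤ ‖y‖ * ‖w‖ := real_inner_le_norm y w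
  show ‖(A†) w‖ ≤ ν⁻¹ * ‖y‖
  rw [inv_mul_eq_div, le_div_iff₀ hν]
  rcases (norm_nonneg ((A†) w)).eq_or_lt with h | h
  · rw [← h, zero_mul]; exact norm_nonneg y
  refine le_of_mul_le_mul_right ?_ h
  calc ‖(A†) w‖ * ν * ‖(A†) w‖ = ν * ‖(A†) w‖ ^ 2 := by ring
    _ ≤ ν * (‖y‖ * ‖w‖) := by gcongr
    _ = ‖y‖ * (ν * ‖w‖) := by ring
    _ ≤ ‖y‖ * ‖(A†) w‖ := by gcongr; exact hA w

theorem ApproximatesLinearOn.surjOn_closedBall_of_le_norm_adjoint {f : E → F} {A : E →L[ℝ] F}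
    {s : Set E} {c : ℝ≥0} (hf : ApproximatesLinearOn f A s c) {ν : ℝ} (hν : 0 < ν)
    (hA : ∀ y, ν * ‖y‖ ≤ ‖(A†) y‖) {b : E} {δ : ℝ} (hδ : 0 ≤ δ) (hb : closedBall b δ ⊆ s) :
    SurjOn f (closedBall b δ) (closedBall (f b) ((ν - c) * δ)) := by
  obtain ⟨g, hAg, hg⟩ := A.exists_rightInverse_of_le_norm_adjoint hν hA
  let g' : A.NonlinearRightInverse :=
    { toFun := g, nnnorm := ⟨ν⁻¹, by positivity⟩, bound' := hg, right_inv' := hAg }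
  have hg' : ((g'.nnnorm : ℝ))⁻¹ = ν := inv_inv ν
  simpa only [hg'] using hf.surjOn_closedBall_of_nonlinearRightInverse g' hδ hb

end RightInverse

theorem local_convexity_hilbert_general
    (X Y : Type*) [NormedAddCommGroup X] [InnerProductSpace ℝ X] [CompleteSpace X]
    [NormedAddCommGroup Y] [InnerProductSpace ℝ Y] [CompleteSpace Y]
    (f : X → Y) (f' : X → X →L[ℝ] Y) (a : X) (r L ν : ℝ)
    (hL : 0 < L)
    (hdiff : ∀ x ∈ Metric.closedBall a r, HasFDerivAt f (f' x) x)
    (hlip : ∀ x ∈ Metric.closedBall a r, ∀ y ∈ Metric.closedBall a r,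
      ‖f' x - f' y‖ ≤ L * ‖x - y‖)
    (hadj : ∀ y : Y, ν * ‖y‖ ≤ ‖ContinuousLinearMap.adjoint (f' a) y‖) :
    ∀ ε : ℝ, 0 < ε → ε < min r (ν / (4 * L)) →
      Convex ℝ (f '' Metric.closedBall a ε) := by
  intro ε hε hεlt
  obtain ⟨hεr, hεν⟩ := lt_min_iff.mp hεlt
  have hLε : 4 * (L * ε) < ν := by rw [lt_div_iff₀ (by positivity)] at hεν; linarith
  have hν : 0 < ν := by nlinarith
  set B := closedBall a ε
  have hB : B ⊆ closedBall a r := closedBall_subset_closedBall hεr.le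
  have hderiv : ∀ x ∈ B, HasFDerivWithinAt f (f' x) B x :=
    fun x hx => (hdiff x (hB hx)).hasFDerivWithinAt
  have hlipB : LipschitzOnWith L.toNNReal f' B := lipschitzOnWith_iff_norm_sub_le.mpr
    fun x hx y hy => by rw [Real.coe_toNNReal _ hL.le]; exact hlip x (hB hx) y (hB hy)
  have happrox : ApproximatesLinearOn f (f' a) B (L * ε).toNNReal :=
    (convex_closedBall a ε).approximatesLinearOn_of_norm_sub_le hderiv fun x hx => by
      rw [Real.coe_toNNReal _ (by positivity)]
      exact (hlip x (hB hx) a (hB (mem_closedBall_self hε.le))).trans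
        (by gcongr; exact mem_closedBall_iff_norm.mp hx)
  rintro _ ⟨x₁, hx₁, rfl⟩ _ ⟨x₂, hx₂, rfl⟩ t u ht hu htu
  set d := t * u * ‖x₁ - x₂‖ ^ 2
  have hsub := closedBall_smul_add_smul_subset hε hx₁ hx₂ ht hu htu
  have hdefect := (convex_closedBall a ε).norm_smul_add_smul_image_sub_le hderiv hlipB
    hx₁ hx₂ ht hu htu
  rw [Real.coe_toNNReal _ hL.le] at hdefect
  obtain ⟨x, hx, hfx⟩ :=
    happrox.surjOn_closedBall_of_le_norm_adjoint hν hadj (by positivity) hsub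
    (show t • f x₁ + u • f x₂ ∈ closedBall _ _ by
      rw [mem_closedBall_iff_norm, Real.coe_toNNReal _ (by positivity)]
      calc _ ≤ L * d := hdefect
        _ = 2 * ε * L * (d / (2 * ε)) := by field_simp
        _ ≤ (ν - L * ε) * (d / (2 * ε)) := by gcongr; linarith)
  exact ⟨x, hsub hx, hfx⟩

/-- Local convexity in Hilbert spaces (Proposition 1): if `f : X → Y` is
differentiable with `L`-Lipschitz derivative on `B_r(a)`, `f'_a` is surjective
and `‖(f'_a)* y‖ ≥ ν‖y‖` for all `y`, then for every `ε < min {r, ν/(4L)}` the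
image `f(B_ε(a))` is convex. -/
theorem local_convexity_hilbert
    (X Y : Type*) [NormedAddCommGroup X] [InnerProductSpace ℝ X] [CompleteSpace X]
    [NormedAddCommGroup Y] [InnerProductSpace ℝ Y] [CompleteSpace Y]
    (f : X → Y) (f' : X → X →L[ℝ] Y) (a : X) (r L ν : ℝ)
    (hr : 0 < r) (hL : 0 < L) (hν : 0 < ν)
    (hdiff : ∀ x ∈ Metric.closedBall a r, HasFDerivAt f (f' x) x)
    (hlip : ∀ x ∈ Metric.closedBall a r, ∀ y ∈ Metric.closedBall a r,
      ‖f' x - f' y‖ ≤ L * ‖x - y‖)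
    (hsurj : Function.Surjective (f' a))
    (hadj : ∀ y : Y, ν * ‖y‖ ≤ ‖ContinuousLinearMap.adjoint (f' a) y‖) :
    ∀ ε : ℝ, 0 < ε → ε < min r (ν / (4 * L)) →
      Convex ℝ (f '' Metric.closedBall a ε) :=
  local_convexity_hilbert_general X Y f f' a r L ν hL hdiff hlip hadj
end

section
/- Let X be a Banach space whose norm has modulus of convexity of power type 2, with constant C ∈ (0,1) such that ‖(x+y)/2‖ ≤ 1 − C‖x−y‖² for ‖x‖,‖y‖ ≤ 1. Let f : U → V be a homeomorphism between open subsets of X that is Lip-differentiable at each point of U and whose inverse f⁻¹ : V → U is locally Lipschitz at each point of V. Then f is locally convex: every point x₀ ∈ U and neighborhood O(x₀) admit a convex neighborhood U(x₀) ⊂ O(x₀) whose image f(U(x₀)) is convex. -/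
/-!
Take a small closed ball `B` around `x₀` and `p, q ∈ B`, `a + b = 1`. Lip-differentiability makes
`f` affine along `[p, q]` up to `L a b ‖p - q‖²`, so `g` moves the point `a f p + b f q` at most
`K L a b ‖p - q‖²` away from `a p + b q`. Power-type-2 convexity pushes `a p + b q` inside `B` by
`2 a b C ‖p - q‖² / r`, which wins once `r K L ≤ 2 C`; hence `a f p + b f q = f (g (a f p + b f q))`
with `g (a f p + b f q) ∈ B`.
-/

open Metric Filter Topology Set
open scoped NNReal

section

variable {E F : Type*} [NormedAddCommGroup E] [NormedSpace ℝ E]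
  [NormedAddCommGroup F] [NormedSpace ℝ F]

variable (E) in
def HasPowerTypeTwoConvexity (C : ℝ) : Prop :=
  ∀ x y : E, ‖x‖ ≤ 1 → ‖y‖ ≤ 1 → ‖(1 / 2 : ℝ) • (x + y)‖ ≤ 1 - C * ‖x - y‖ ^ 2

namespace HasPowerTypeTwoConvexity

variable {C r : ℝ} {x y : E}

theorem mul_norm_midpoint_le (h : HasPowerTypeTwoConvexity E C) (hr : 0 < r)
    (hx : ‖x‖ ≤ r) (hy : ‖y‖ ≤ r) :
    r * ‖(1 / 2 : ℝ) • (x + y)‖ ≤ r ^ 2 - C * ‖x - y‖ ^ 2 := by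
  have hunit : ∀ {v : E}, ‖v‖ ≤ r → ‖r⁻¹ • v‖ ≤ 1 := fun hv => by
    rw [norm_smul, norm_inv, Real.norm_of_nonneg hr.le]
    exact inv_mul_le_one_of_le₀ hv hr.le
  have hscaled := h _ _ (hunit hx) (hunit hy)
  rw [← smul_add, smul_comm, ← smul_sub, norm_smul r⁻¹, norm_smul r⁻¹, norm_inv,
    Real.norm_of_nonneg hr.le] at hscaled
  calc r * ‖(1 / 2 : ℝ) • (x + y)‖ = r ^ 2 * (r⁻¹ * ‖(1 / 2 : ℝ) • (x + y)‖) := by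
        field_simp
    _ ≤ r ^ 2 * (1 - C * (r⁻¹ * ‖x - y‖) ^ 2) := by gcongr
    _ = r ^ 2 - C * ‖x - y‖ ^ 2 := by field_simp

theorem mul_norm_smul_add_smul_le_of_le_half (h : HasPowerTypeTwoConvexity E C) (hr : 0 < r)
    (hx : ‖x‖ ≤ r) (hy : ‖y‖ ≤ r) {a : ℝ} (ha : 0 ≤ a) (ha2 : a ≤ 1 / 2) :
    r * ‖a • x + (1 - a) • y‖ ≤ r ^ 2 - 2 * a * C * ‖x - y‖ ^ 2 := by
  have hsplit : a • x + (1 - a) • y = (1 - 2 * a) • y + (2 * a) • ((1 / 2 : ℝ) • (x + y)) := by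
    module
  have hmid := h.mul_norm_midpoint_le hr hx hy
  calc r * ‖a • x + (1 - a) • y‖
      ≤ (1 - 2 * a) * (r * ‖y‖) + 2 * a * (r * ‖(1 / 2 : ℝ) • (x + y)‖) := by
        rw [hsplit]
        refine (mul_le_mul_of_nonneg_left (norm_add_le _ _) hr.le).trans_eq ?_
        rw [norm_smul, norm_smul, Real.norm_of_nonneg (by linarith),
          Real.norm_of_nonneg (by linarith)]
        ring
    _ ≤ (1 - 2 * a) * (r * r) + 2 * a * (r ^ 2 - C * ‖x - y‖ ^ 2) := by
        gcongr
        linarith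
    _ = r ^ 2 - 2 * a * C * ‖x - y‖ ^ 2 := by ring

theorem mul_norm_smul_add_smul_le (h : HasPowerTypeTwoConvexity E C) (hC : 0 ≤ C) (hr : 0 < r)
    (hx : ‖x‖ ≤ r) (hy : ‖y‖ ≤ r) {a b : ℝ} (ha : 0 ≤ a) (hb : 0 ≤ b) (hab : a + b = 1) :
    r * ‖a • x + b • y‖ ≤ r ^ 2 - 2 * a * b * C * ‖x - y‖ ^ 2 := by
  have hd : 0 ≤ C * ‖x - y‖ ^ 2 := by positivity
  rcases le_total a (1 / 2) with ha2 | hb2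
  · obtain rfl : b = 1 - a := by linarith
    have := h.mul_norm_smul_add_smul_le_of_le_half hr hx hy ha ha2
    nlinarith [mul_nonneg (mul_nonneg ha ha) hd]
  · obtain rfl : a = 1 - b := by linarith
    have := h.mul_norm_smul_add_smul_le_of_le_half hr hy hx hb (by linarith)
    rw [add_comm, norm_sub_rev y x] at this
    nlinarith [mul_nonneg (mul_nonneg hb hb) hd]

end HasPowerTypeTwoConvexity

theorem norm_smul_add_smul_sub_le_of_quadratic_remainder {f : E → F} {f' : E → E →L[ℝ] F}
    {L a b : ℝ} {s : Set E} {p q : E} (hs : Convex ℝ s)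
    (hrem : ∀ x ∈ s, ∀ y ∈ s, ‖f y - f x - f' x (y - x)‖ ≤ L * ‖y - x‖ ^ 2)
    (hp : p ∈ s) (hq : q ∈ s) (ha : 0 ≤ a) (hb : 0 ≤ b) (hab : a + b = 1) :
    ‖a • f p + b • f q - f (a • p + b • q)‖ ≤ L * a * b * ‖p - q‖ ^ 2 := by
  obtain rfl : b = 1 - a := by linarith
  set n := a • p + (1 - a) • q
  have hn : n ∈ s := hs hp hq ha hb hab
  have hpn : p - n = (1 - a) • (p - q) := by module
  have hqn : q - n = a • (q - p) := by module
  -- `f' n` is linear and `a (p - n) + (1 - a) (q - n) = 0`, so the linear terms cancel.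
  have hsplit : a • f p + (1 - a) • f q - f n =
      a • (f p - f n - f' n (p - n)) + (1 - a) • (f q - f n - f' n (q - n)) := by
    rw [hpn, hqn, map_smul, map_smul, map_sub, map_sub]
    module
  calc ‖a • f p + (1 - a) • f q - f n‖
      ≤ a * ‖f p - f n - f' n (p - n)‖ + (1 - a) * ‖f q - f n - f' n (q - n)‖ := by
        rw [hsplit]
        refine (norm_add_le _ _).trans_eq ?_
        rw [norm_smul, norm_smul, Real.norm_of_nonneg ha, Real.norm_of_nonneg hb]
    _ ≤ a * (L * ‖p - n‖ ^ 2) + (1 - a) * (L * ‖q - n‖ ^ 2) := by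
        gcongr
        exacts [hrem n hn p hp, hrem n hn q hq]
    _ = L * a * (1 - a) * ‖p - q‖ ^ 2 := by
        rw [hpn, hqn, norm_smul, norm_smul, Real.norm_of_nonneg ha, Real.norm_of_nonneg hb,
          norm_sub_rev q p]
        ring

theorem convex_image_closedBall_of_quadratic_remainder {C L r : ℝ} {K : ℝ≥0} {x₀ : E}
    {T : Set E} {f g : E → E} {f' : E → E →L[ℝ] E}
    (hconv : HasPowerTypeTwoConvexity E C) (hC : 0 ≤ C) (hr : 0 < r)
    (hsmall : r * (K * L) ≤ 2 * C)
    (hrem : ∀ x ∈ closedBall x₀ r, ∀ y ∈ closedBall x₀ r,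
      ‖f y - f x - f' x (y - x)‖ ≤ L * ‖y - x‖ ^ 2)
    (hT : Convex ℝ T) (hfT : MapsTo f (closedBall x₀ r) T) (hg : LipschitzOnWith K g T)
    (hgf : ∀ x ∈ closedBall x₀ r, g (f x) = x) (hfg : ∀ y ∈ T, f (g y) = y) :
    Convex ℝ (f '' closedBall x₀ r) := by
  rintro _ ⟨p, hp, rfl⟩ _ ⟨q, hq, rfl⟩ a b ha hb hab
  set z := a • f p + b • f q
  set n := a • p + b • q
  have hn : n ∈ closedBall x₀ r := convex_closedBall x₀ r hp hq ha hb hab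
  have hzT : z ∈ T := hT (hfT hp) (hfT hq) ha hb hab
  have hgz : ‖g z - n‖ ≤ K * (L * a * b * ‖p - q‖ ^ 2) := by
    calc ‖g z - n‖ = ‖g z - g (f n)‖ := by rw [hgf n hn]
      _ ≤ K * ‖z - f n‖ := hg.norm_sub_le hzT (hfT hn)
      _ ≤ K * (L * a * b * ‖p - q‖ ^ 2) := by
        gcongr
        exact norm_smul_add_smul_sub_le_of_quadratic_remainder (convex_closedBall x₀ r) hrem
          hp hq ha hb hab
  have hn₀ : r * ‖n - x₀‖ ≤ r ^ 2 - 2 * a * b * C * ‖p - q‖ ^ 2 := by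
    have hcenter : n - x₀ = a • (p - x₀) + b • (q - x₀) := by
      simp only [n, eq_sub_of_add_eq' hab]; module
    rw [hcenter, ← sub_sub_sub_cancel_right p q x₀]
    exact hconv.mul_norm_smul_add_smul_le hC hr (mem_closedBall_iff_norm.mp hp)
      (mem_closedBall_iff_norm.mp hq) ha hb hab
  have hgz₀ : r * ‖g z - x₀‖ ≤ r * r := by
    have habd : 0 ≤ a * b * ‖p - q‖ ^ 2 := by positivity
    calc r * ‖g z - x₀‖ ≤ r * ‖g z - n‖ + r * ‖n - x₀‖ := by
          rw [← mul_add]; gcongr; exact norm_sub_le_norm_sub_add_norm_sub _ _ _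
      _ ≤ r * (K * L) * (a * b * ‖p - q‖ ^ 2) + (r ^ 2 - 2 * C * (a * b * ‖p - q‖ ^ 2)) := by
          gcongr ?_ + ?_
          · exact (mul_le_mul_of_nonneg_left hgz hr.le).trans_eq (by ring)
          · exact hn₀.trans_eq (by ring)
      _ ≤ r * r := by nlinarith
  exact ⟨g z, mem_closedBall_iff_norm.mpr (le_of_mul_le_mul_left hgz₀ hr), hfg z hzT⟩

end

theorem local_convexity_banach_power_two_general
    (X : Type*) [NormedAddCommGroup X] [NormedSpace ℝ X]
    (C : ℝ) (hC0 : 0 < C)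
    (hconv : ∀ x y : X, ‖x‖ ≤ 1 → ‖y‖ ≤ 1 →
      ‖(1 / 2 : ℝ) • (x + y)‖ ≤ 1 - C * ‖x - y‖ ^ 2)
    (U V : Set X)
    (f g : X → X)
    (hfV : Set.MapsTo f U V)
    (hgf : ∀ x ∈ U, g (f x) = x) (hfg : ∀ y ∈ V, f (g y) = y)
    -- `f` is Lip-differentiable at each point of `U`:
    (hlipdiff : ∀ x₀ ∈ U, ∃ W ∈ nhds x₀, W ⊆ U ∧
      ∃ (f' : X → X →L[ℝ] X) (L : ℝ),
        (∀ x ∈ W, HasFDerivAt f (f' x) x) ∧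
        ∀ x ∈ W, ∀ y ∈ W, ‖f y - f x - f' x (y - x)‖ ≤ L * ‖y - x‖ ^ 2)
    -- `f⁻¹` is locally Lipschitz at each point of `V`:
    (hglip : ∀ y₀ ∈ V, ∃ W' ∈ nhds y₀, W' ⊆ V ∧ ∃ L : ℝ,
      ∀ u ∈ W', ∀ v ∈ W', ‖g u - g v‖ ≤ L * ‖u - v‖) :
    -- `f` is locally convex:
    ∀ x₀ ∈ U, ∀ O : Set X, IsOpen O → x₀ ∈ O → O ⊆ U →
      ∃ Ux : Set X, Ux ∈ nhds x₀ ∧ Ux ⊆ O ∧ Convex ℝ Ux ∧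
        Convex ℝ (f '' Ux) := by
  intro x₀ hx₀ O hO hx₀O _
  obtain ⟨W, hW, hWU, f', L, hderiv, hrem⟩ := hlipdiff x₀ hx₀
  obtain ⟨W', hW', hW'V, K, hK⟩ := hglip (f x₀) (hfV hx₀)
  obtain ⟨ε, hε, hεW'⟩ := Metric.mem_nhds_iff.mp hW'
  have hg : LipschitzOnWith K.toNNReal g (ball (f x₀) ε) :=
    (LipschitzOnWith.of_dist_le' fun u hu v hv => by
      simpa only [dist_eq_norm] using hK u hu v hv).mono hεW'
  have hB : ∀ᶠ r in 𝓝 (0 : ℝ), closedBall x₀ r ⊆ O ∩ W ∩ f ⁻¹' ball (f x₀) ε :=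
    eventually_closedBall_subset <| inter_mem (inter_mem (hO.mem_nhds hx₀O) hW) <|
      (hderiv x₀ (mem_of_mem_nhds hW)).continuousAt.preimage_mem_nhds (ball_mem_nhds _ hε)
  have hsmall : ∀ᶠ r in 𝓝 (0 : ℝ), r * (K.toNNReal * L) < 2 * C :=
    (continuous_mul_const _).continuousAt.eventually_lt continuousAt_const (by simpa using hC0)
  obtain ⟨r, hr, hBr, hsmallr⟩ := (hB.and hsmall).exists_gt
  refine ⟨closedBall x₀ r, closedBall_mem_nhds x₀ hr, fun x hx => (hBr hx).1.1,
    convex_closedBall x₀ r, ?_⟩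
  exact convex_image_closedBall_of_quadratic_remainder hconv hC0.le hr hsmallr.le
    (fun x hx y hy => hrem x (hBr hx).1.2 y (hBr hy).1.2) (convex_ball _ _)
    (fun x hx => (hBr hx).2) hg (fun x hx => hgf x (hWU (hBr hx).1.2))
    (fun y hy => hfg y (hW'V (hεW' hy)))

/-- Theorem 3: Let `X` be a Banach space whose norm has modulus of convexity of
power type 2, with constant `C ∈ (0,1)` such that `‖(x+y)/2‖ ≤ 1 - C‖x-y‖²`
for `‖x‖, ‖y‖ ≤ 1`. A homeomorphism `f : U → V` between open subsets of `X`
which is Lip-differentiable at each point of `U` and whose inverse `g = f⁻¹` is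
locally Lipschitz at each point of `V` is locally convex. -/
theorem local_convexity_banach_power_two
    (X : Type*) [NormedAddCommGroup X] [NormedSpace ℝ X] [CompleteSpace X]
    (C : ℝ) (hC0 : 0 < C) (hC1 : C < 1)
    (hconv : ∀ x y : X, ‖x‖ ≤ 1 → ‖y‖ ≤ 1 →
      ‖(1 / 2 : ℝ) • (x + y)‖ ≤ 1 - C * ‖x - y‖ ^ 2)
    (U V : Set X) (hUopen : IsOpen U) (hVopen : IsOpen V)
    (f g : X → X)
    (hfV : Set.MapsTo f U V) (hgU : Set.MapsTo g V U)
    (hgf : ∀ x ∈ U, g (f x) = x) (hfg : ∀ y ∈ V, f (g y) = y)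
    (hfc : ContinuousOn f U) (hgc : ContinuousOn g V)
    -- `f` is Lip-differentiable at each point of `U`:
    (hlipdiff : ∀ x₀ ∈ U, ∃ W ∈ nhds x₀, W ⊆ U ∧
      ∃ (f' : X → X →L[ℝ] X) (L : ℝ),
        (∀ x ∈ W, HasFDerivAt f (f' x) x) ∧
        ∀ x ∈ W, ∀ y ∈ W, ‖f y - f x - f' x (y - x)‖ ≤ L * ‖y - x‖ ^ 2)
    -- `f⁻¹` is locally Lipschitz at each point of `V`:
    (hglip : ∀ y₀ ∈ V, ∃ W' ∈ nhds y₀, W' ⊆ V ∧ ∃ L : ℝ,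
      ∀ u ∈ W', ∀ v ∈ W', ‖g u - g v‖ ≤ L * ‖u - v‖) :
    -- `f` is locally convex:
    ∀ x₀ ∈ U, ∀ O : Set X, IsOpen O → x₀ ∈ O → O ⊆ U →
      ∃ Ux : Set X, Ux ∈ nhds x₀ ∧ Ux ⊆ O ∧ Convex ℝ Ux ∧
        Convex ℝ (f '' Ux) :=
  local_convexity_banach_power_two_general X C hC0 hconv U V f g hfV hgf hfg hlipdiff hglip
end

section
/- Let X be a Banach space and Y a Banach space with modulus of convexity of power 2. A homeomorphism f : U → V between open subsets U ⊂ X and V ⊂ Y is locally convex provided f is locally second order Lipschitz and f⁻¹ : V → U is locally Lipschitz. -/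
/-!
Take `Ux = B ∩ f⁻¹ D`, where `B` is a small closed ball around `x₀` and `D` a closed ball of
radius `R` around `f x₀` so small that `g = f⁻¹` maps `D` into `B`; then `f '' Ux = D` is convex.
For `x₁, x₂ ∈ Ux`, the value of `f` at their midpoint differs from the midpoint of `f x₁, f x₂`
by half a second difference, of size `O(‖x₁ - x₂‖²) = O(‖f x₁ - f x₂‖²)` because `g` is
Lipschitz, while the power-2 modulus of convexity puts the midpoint of `f x₁, f x₂` at depth
`C ‖f x₁ - f x₂‖² / R` inside `D`. For small `R` the depth wins, so `Ux` is midpoint convex, and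
being closed it is convex.
-/

open Set Filter Topology Metric

theorem Real.dyadic_mem_of_midpoint_mem {T : Set ℝ} (h0 : 0 ∈ T) (h1 : 1 ∈ T)
    (hmid : ∀ s ∈ T, ∀ t ∈ T, midpoint ℝ s t ∈ T) :
    ∀ n k : ℕ, k ≤ 2 ^ n → (k / 2 ^ n : ℝ) ∈ T := by
  intro n
  induction n with
  | zero =>
    intro k hk
    interval_cases k <;> simpa
  | succ n ih =>
    intro k hk
    rw [pow_succ] at hk
    have hsplit : (k / 2 ^ (n + 1) : ℝ) =
        midpoint ℝ ((k / 2 : ℕ) / 2 ^ n : ℝ) ((k - k / 2 : ℕ) / 2 ^ n) := by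
      rw [midpoint_eq_smul_add, Nat.cast_sub (Nat.div_le_self k 2)]
      simp only [invOf_eq_inv, smul_eq_mul, pow_succ]
      ring
    rw [hsplit]
    exact hmid _ (ih _ (by omega)) _ (ih _ (by omega))

theorem Real.Icc_subset_of_isClosed_of_midpoint_mem {T : Set ℝ} (hT : IsClosed T)
    (h0 : 0 ∈ T) (h1 : 1 ∈ T) (hmid : ∀ s ∈ T, ∀ t ∈ T, midpoint ℝ s t ∈ T) :
    Icc 0 1 ⊆ T := by
  rintro t ⟨ht0, ht1⟩
  have hlim : Tendsto (fun n : ℕ ↦ (⌊t * 2 ^ n⌋₊ / 2 ^ n : ℝ)) atTop (𝓝 t) :=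
    (tendsto_nat_floor_mul_div_atTop ht0).comp (tendsto_pow_atTop_atTop_of_one_lt one_lt_two)
  refine hT.mem_of_tendsto hlim (Eventually.of_forall fun n ↦ ?_)
  refine Real.dyadic_mem_of_midpoint_mem h0 h1 hmid n _ (Nat.floor_le_of_le ?_)
  push_cast
  exact mul_le_of_le_one_left (by positivity) ht1

theorem IsClosed.convex_of_midpoint_mem {E : Type*} [AddCommGroup E] [Module ℝ E]
    [TopologicalSpace E] [IsTopologicalAddGroup E] [ContinuousSMul ℝ E] {s : Set E}
    (hs : IsClosed s) (hmid : ∀ x ∈ s, ∀ y ∈ s, midpoint ℝ x y ∈ s) : Convex ℝ s := by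
  refine convex_iff_segment_subset.2 fun x hx y hy ↦ ?_
  rw [segment_eq_image_lineMap, image_subset_iff]
  refine Real.Icc_subset_of_isClosed_of_midpoint_mem
    (hs.preimage AffineMap.lineMap_continuous) (by simpa) (by simpa) fun a ha b hb ↦ ?_
  rw [mem_preimage, AffineMap.map_midpoint]
  exact hmid _ ha _ hb

theorem eventually_mul_le_nhdsGT_zero (c : ℝ) {ε : ℝ} (hε : 0 < ε) :
    ∀ᶠ R in 𝓝[>] (0 : ℝ), c * R ≤ ε :=
  nhdsWithin_le_nhds <|
    ((continuous_const_mul c).tendsto' 0 0 (mul_zero c)).eventually (eventually_le_nhds hε)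

theorem LipschitzOnWith.mapsTo_closedBall {α β : Type*} [PseudoMetricSpace α]
    [PseudoMetricSpace β] {K : NNReal} {f : α → β} {s : Set α} {x : α} {r : ℝ}
    (hf : LipschitzOnWith K f s) (hs : closedBall x r ⊆ s) :
    MapsTo f (closedBall x r) (closedBall (f x) (K * r)) := fun y hy ↦
  (hf.dist_le_mul y (hs hy) x (hs (mem_closedBall_self (dist_nonneg.trans hy)))).trans
    (mul_le_mul_of_nonneg_left hy K.2)

section

variable {E F : Type*} [NormedAddCommGroup E] [NormedSpace ℝ E]
  [NormedAddCommGroup F] [NormedSpace ℝ F]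

def HasPowerTwoModulusOfConvexity (F : Type*) [NormedAddCommGroup F] [NormedSpace ℝ F]
    (C : ℝ) : Prop :=
  ∀ u v : F, ‖u‖ ≤ 1 → ‖v‖ ≤ 1 → ‖(1 / 2 : ℝ) • (u + v)‖ ≤ 1 - C * ‖u - v‖ ^ 2

def SecondOrderLipschitzOnWith (L : ℝ) (f : E → F) (s : Set E) : Prop :=
  ∀ x h : E, segment ℝ (x - h) (x + h) ⊆ s →
    ‖f (x + h) - (2 : ℝ) • f x + f (x - h)‖ ≤ L * ‖h‖ ^ 2

namespace HasPowerTwoModulusOfConvexity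

variable {C R : ℝ} {a b c m : F}

theorem dist_midpoint_le (hF : HasPowerTwoModulusOfConvexity F C) (hR : 0 < R)
    (ha : a ∈ closedBall c R) (hb : b ∈ closedBall c R) :
    dist (midpoint ℝ a b) c ≤ R - C * dist a b ^ 2 / R := by
  rw [mem_closedBall, dist_eq_norm] at ha hb
  have hu : ‖R⁻¹ • (a - c)‖ ≤ 1 := by
    rw [norm_smul, Real.norm_of_nonneg (inv_nonneg.2 hR.le)]
    exact inv_mul_le_one_of_le₀ ha hR.le
  have hv : ‖R⁻¹ • (b - c)‖ ≤ 1 := by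
    rw [norm_smul, Real.norm_of_nonneg (inv_nonneg.2 hR.le)]
    exact inv_mul_le_one_of_le₀ hb hR.le
  have key := hF _ _ hu hv
  have hmid : (1 / 2 : ℝ) • (R⁻¹ • (a - c) + R⁻¹ • (b - c)) =
      R⁻¹ • (midpoint ℝ a b - c) := by
    rw [midpoint_eq_smul_add]; simp only [invOf_eq_inv]; module
  have hdiff : R⁻¹ • (a - c) - R⁻¹ • (b - c) = R⁻¹ • (a - b) := by module
  rw [hmid, hdiff, norm_smul, norm_smul, Real.norm_of_nonneg (inv_nonneg.2 hR.le)] at key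
  have := mul_le_mul_of_nonneg_left key hR.le
  rw [dist_eq_norm, dist_eq_norm]
  field_simp at this ⊢
  linarith

theorem mem_closedBall_of_norm_secondDiff_le (hF : HasPowerTwoModulusOfConvexity F C)
    (hR : 0 < R) (ha : a ∈ closedBall c R) (hb : b ∈ closedBall c R)
    (hm : ‖a - (2 : ℝ) • m + b‖ ≤ 2 * C * dist a b ^ 2 / R) : m ∈ closedBall c R := by
  have hsplit : m - c = (midpoint ℝ a b - c) - (1 / 2 : ℝ) • (a - (2 : ℝ) • m + b) := by
    rw [midpoint_eq_smul_add]; simp only [invOf_eq_inv]; module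
  rw [mem_closedBall, dist_eq_norm, hsplit]
  calc ‖(midpoint ℝ a b - c) - (1 / 2 : ℝ) • (a - (2 : ℝ) • m + b)‖
      ≤ ‖midpoint ℝ a b - c‖ + (1 / 2) * ‖a - (2 : ℝ) • m + b‖ := by
        refine (norm_sub_le _ _).trans_eq ?_
        rw [norm_smul, Real.norm_of_nonneg (by norm_num)]
    _ ≤ (R - C * dist a b ^ 2 / R) + (1 / 2) * (2 * C * dist a b ^ 2 / R) := by
        gcongr
        rw [← dist_eq_norm]
        exact hF.dist_midpoint_le hR ha hb
    _ = R := by ring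

end HasPowerTwoModulusOfConvexity

theorem SecondOrderLipschitzOnWith.norm_secondDiff_midpoint_le {L : ℝ} {f : E → F}
    {s : Set E} (hf : SecondOrderLipschitzOnWith L f s) (hs : Convex ℝ s) {x y : E}
    (hx : x ∈ s) (hy : y ∈ s) :
    ‖f x - (2 : ℝ) • f (midpoint ℝ x y) + f y‖ ≤ L * ‖x - y‖ ^ 2 / 4 := by
  have hplus : midpoint ℝ x y + (1 / 2 : ℝ) • (x - y) = x := by
    rw [midpoint_eq_smul_add]; simp only [invOf_eq_inv]; module
  have hminus : midpoint ℝ x y - (1 / 2 : ℝ) • (x - y) = y := by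
    rw [midpoint_eq_smul_add]; simp only [invOf_eq_inv]; module
  have key := hf (midpoint ℝ x y) ((1 / 2 : ℝ) • (x - y))
    (by rw [hplus, hminus, segment_symm]; exact hs.segment_subset hx hy)
  rw [hplus, hminus, norm_smul, Real.norm_of_nonneg (by norm_num)] at key
  linarith

theorem convex_inter_preimage_closedBall {f : E → F} {g : F → E} {B : Set E} {C L R : ℝ}
    {K : NNReal} {y₀ : F} (hF : HasPowerTwoModulusOfConvexity F C) (hC : 0 ≤ C) (hR : 0 < R)
    (hLKR : L * K ^ 2 * R ≤ 8 * C) (hB : Convex ℝ B) (hBc : IsClosed B)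
    (hfc : ContinuousOn f B) (hf : SecondOrderLipschitzOnWith L f B) (hgf : LeftInvOn g f B)
    (hg : LipschitzOnWith K g (closedBall y₀ R)) :
    Convex ℝ (B ∩ f ⁻¹' closedBall y₀ R) := by
  refine (hfc.preimage_isClosed_of_isClosed hBc isClosed_closedBall).convex_of_midpoint_mem ?_
  rintro x₁ ⟨hx₁, hy₁⟩ x₂ ⟨hx₂, hy₂⟩
  refine ⟨hB.midpoint_mem hx₁ hx₂, hF.mem_closedBall_of_norm_secondDiff_le hR hy₁ hy₂ ?_⟩
  have hdist : ‖x₁ - x₂‖ ≤ K * dist (f x₁) (f x₂) := by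
    simpa only [hgf hx₁, hgf hx₂, dist_eq_norm] using hg.dist_le_mul _ hy₁ _ hy₂
  refine (hf.norm_secondDiff_midpoint_le hB hx₁ hx₂).trans ?_
  rcases le_total L 0 with hL | hL
  · have : L * ‖x₁ - x₂‖ ^ 2 ≤ 0 := mul_nonpos_of_nonpos_of_nonneg hL (sq_nonneg _)
    have : 0 ≤ 2 * C * dist (f x₁) (f x₂) ^ 2 / R := by positivity
    linarith
  · calc L * ‖x₁ - x₂‖ ^ 2 / 4 ≤ L * (K * dist (f x₁) (f x₂)) ^ 2 / 4 := by gcongr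
      _ = (L * K ^ 2 * R) * dist (f x₁) (f x₂) ^ 2 / (4 * R) := by field_simp
      _ ≤ (8 * C) * dist (f x₁) (f x₂) ^ 2 / (4 * R) := by gcongr
      _ = 2 * C * dist (f x₁) (f x₂) ^ 2 / R := by field_simp; ring

end

theorem local_convexity_second_order_lipschitz_general
    (X Y : Type*) [NormedAddCommGroup X] [NormedSpace ℝ X]
    [NormedAddCommGroup Y] [NormedSpace ℝ Y]
    -- `Y` has modulus of convexity of power 2:
    (hY : ∃ C : ℝ, 0 < C ∧ ∀ u v : Y, ‖u‖ ≤ 1 → ‖v‖ ≤ 1 →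
      ‖(1 / 2 : ℝ) • (u + v)‖ ≤ 1 - C * ‖u - v‖ ^ 2)
    (U : Set X) (V : Set Y) (hUopen : IsOpen U)
    (f : X → Y) (g : Y → X)
    (hfV : Set.MapsTo f U V)
    (hgf : ∀ x ∈ U, g (f x) = x) (hfg : ∀ y ∈ V, f (g y) = y)
    (hfc : ContinuousOn f U)
    -- `f` is locally second order Lipschitz:
    (hf2 : ∀ x₀ ∈ U, ∃ W ∈ nhds x₀, W ⊆ U ∧ ∃ L : ℝ,
      ∀ x h : X, segment ℝ (x - h) (x + h) ⊆ W →
        ‖f (x + h) - (2 : ℝ) • f x + f (x - h)‖ ≤ L * ‖h‖ ^ 2)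
    -- `g = f⁻¹` is locally Lipschitz:
    (hglip : ∀ y₀ ∈ V, ∃ W' ∈ nhds y₀, W' ⊆ V ∧ ∃ L : ℝ,
      ∀ u ∈ W', ∀ v ∈ W', ‖g u - g v‖ ≤ L * ‖u - v‖) :
    -- `f` is locally convex:
    ∀ x₀ ∈ U, ∀ O : Set X, IsOpen O → x₀ ∈ O → O ⊆ U →
      ∃ Ux : Set X, Ux ∈ nhds x₀ ∧ Ux ⊆ O ∧ Convex ℝ Ux ∧
        Convex ℝ (f '' Ux) := by
  intro x₀ hx₀ O hO hx₀O hOU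
  obtain ⟨C, hC, hF⟩ := hY
  obtain ⟨W, hW, -, L, hf⟩ := hf2 x₀ hx₀
  obtain ⟨W', hW', hW'V, L', hg⟩ := hglip (f x₀) (hfV hx₀)
  obtain ⟨r, hr, hrWO⟩ := nhds_basis_closedBall.mem_iff.1 (inter_mem hW (hO.mem_nhds hx₀O))
  obtain ⟨R₀, hR₀, hR₀W'⟩ := nhds_basis_closedBall.mem_iff.1 hW'
  set K := L'.toNNReal
  obtain ⟨R, hR, hRR₀, hKR, hLKR⟩ :
      ∃ R : ℝ, 0 < R ∧ 1 * R ≤ R₀ ∧ K * R ≤ r ∧ L * K ^ 2 * R ≤ 8 * C :=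
    (eventually_mem_nhdsWithin.and <| (eventually_mul_le_nhdsGT_zero 1 hR₀).and <|
      (eventually_mul_le_nhdsGT_zero K hr).and (eventually_mul_le_nhdsGT_zero _ (by positivity))
      ).exists
  have hDW' : closedBall (f x₀) R ⊆ W' := (closedBall_subset_closedBall (by linarith)).trans hR₀W'
  have hBU : closedBall x₀ r ⊆ U := fun x hx ↦ hOU (hrWO hx).2
  have hgLip : LipschitzOnWith K g (closedBall (f x₀) R) :=
    (LipschitzOnWith.of_dist_le' (by simpa only [dist_eq_norm] using hg)).mono hDW'
  have hgD : MapsTo g (closedBall (f x₀) R) (closedBall x₀ r) := by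
    simpa only [hgf x₀ hx₀] using (hgLip.mapsTo_closedBall subset_rfl).mono_right
      (closedBall_subset_closedBall hKR)
  refine ⟨closedBall x₀ r ∩ f ⁻¹' closedBall (f x₀) R,
    inter_mem (closedBall_mem_nhds x₀ hr)
      (hfc.continuousAt (hUopen.mem_nhds hx₀) (closedBall_mem_nhds (f x₀) hR)),
    fun x hx ↦ (hrWO hx.1).2,
    convex_inter_preimage_closedBall hF hC.le hR hLKR (convex_closedBall x₀ r) isClosed_closedBall
      (hfc.mono hBU) (fun x h hs ↦ hf x h (hs.trans fun z hz ↦ (hrWO hz).1))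
      (fun x hx ↦ hgf x (hBU hx)) hgLip, ?_⟩
  have hsurj : SurjOn f (closedBall x₀ r) (closedBall (f x₀) R) :=
    RightInvOn.surjOn (fun y hy ↦ hfg y (hW'V (hDW' hy))) hgD
  rw [image_inter_preimage, inter_eq_right.2 hsurj]
  exact convex_closedBall (f x₀) R

/-- Theorem: Let `X` be a Banach space and `Y` a Banach space with modulus of
convexity of power 2. A homeomorphism `f : U → V` (with inverse `g`) between
open subsets `U ⊆ X`, `V ⊆ Y` is locally convex provided `f` is locally second
order Lipschitz and `g = f⁻¹` is locally Lipschitz. -/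
theorem local_convexity_second_order_lipschitz
    (X Y : Type*) [NormedAddCommGroup X] [NormedSpace ℝ X] [CompleteSpace X]
    [NormedAddCommGroup Y] [NormedSpace ℝ Y] [CompleteSpace Y]
    -- `Y` has modulus of convexity of power 2:
    (hY : ∃ C : ℝ, 0 < C ∧ ∀ u v : Y, ‖u‖ ≤ 1 → ‖v‖ ≤ 1 →
      ‖(1 / 2 : ℝ) • (u + v)‖ ≤ 1 - C * ‖u - v‖ ^ 2)
    (U : Set X) (V : Set Y) (hUopen : IsOpen U) (hVopen : IsOpen V)
    (f : X → Y) (g : Y → X)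
    (hfV : Set.MapsTo f U V) (hgU : Set.MapsTo g V U)
    (hgf : ∀ x ∈ U, g (f x) = x) (hfg : ∀ y ∈ V, f (g y) = y)
    (hfc : ContinuousOn f U) (hgc : ContinuousOn g V)
    -- `f` is locally second order Lipschitz:
    (hf2 : ∀ x₀ ∈ U, ∃ W ∈ nhds x₀, W ⊆ U ∧ ∃ L : ℝ,
      ∀ x h : X, segment ℝ (x - h) (x + h) ⊆ W →
        ‖f (x + h) - (2 : ℝ) • f x + f (x - h)‖ ≤ L * ‖h‖ ^ 2)
    -- `g = f⁻¹` is locally Lipschitz: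
    (hglip : ∀ y₀ ∈ V, ∃ W' ∈ nhds y₀, W' ⊆ V ∧ ∃ L : ℝ,
      ∀ u ∈ W', ∀ v ∈ W', ‖g u - g v‖ ≤ L * ‖u - v‖) :
    -- `f` is locally convex:
    ∀ x₀ ∈ U, ∀ O : Set X, IsOpen O → x₀ ∈ O → O ⊆ U →
      ∃ Ux : Set X, Ux ∈ nhds x₀ ∧ Ux ⊆ O ∧ Convex ℝ Ux ∧
        Convex ℝ (f '' Ux) :=
  local_convexity_second_order_lipschitz_general X Y hY U V hUopen f g hfV hgf hfg hfc hf2 hglip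
end

section
/- Let f : X → Y be Fréchet differentiable on a convex set containing the segment [x₀, x̄] with derivative map Lipschitz of constant L, and suppose ‖(f'_{x₀})*(y)‖ ≥ μ₀‖y‖ for all y ∈ Y. If ‖x̄ − x₀‖ ≤ 2ε and μ := μ₀ − Lε > 0, then the operator T = ∫₀¹ f'_{x(t)} dt (where x(t) = x₀ + t(x̄ − x₀)) satisfies ‖T*(y)‖ ≥ μ‖y‖ for all y ∈ Y, and f(x̄) − f(x₀) = T(x̄ − x₀). -/
/-!
Along the segment `x(t) = x₀ + t • (xb - x₀)` the fundamental theorem of calculus gives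
`f xb - f x₀ = T (xb - x₀)` with `T = ∫₀¹ f'(x(t)) dt`. The Lipschitz bound
`‖f'(x(t)) - f' x₀‖ ≤ L t ‖xb - x₀‖` integrates to `‖T - f' x₀‖ ≤ (L / 2) ‖xb - x₀‖ ≤ L ε`, and
since taking adjoints is an isometry, `T*` differs from `(f' x₀)*` by at most `L ε` in operator
norm, which lowers the bound `μ₀` below by at most `L ε`.
-/

open Set intervalIntegral

section Segment

variable {E : Type*} [NormedAddCommGroup E] [NormedSpace ℝ E]

theorem add_smul_sub_mem_segment (x₀ xb : E) {t : ℝ} (ht : t ∈ Icc (0 : ℝ) 1) :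
    x₀ + t • (xb - x₀) ∈ segment ℝ x₀ xb := by
  rw [segment_eq_image']
  exact ⟨t, ht, rfl⟩

theorem LipschitzOnWith.continuousOn_comp_segment {α : Type*} [PseudoEMetricSpace α]
    {g : E → α} {K : NNReal} {x₀ xb : E}
    (hg : LipschitzOnWith K g (segment ℝ x₀ xb)) :
    ContinuousOn (fun t : ℝ => g (x₀ + t • (xb - x₀))) (Icc 0 1) :=
  hg.continuousOn.comp (by fun_prop) fun _ ht => add_smul_sub_mem_segment x₀ xb ht

variable {F : Type*} [NormedAddCommGroup F] [NormedSpace ℝ F] [CompleteSpace F]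

theorem sub_eq_integral_fderiv_segment_apply {f : E → F} {f' : E → E →L[ℝ] F} {x₀ xb : E}
    (hdiff : ∀ x ∈ segment ℝ x₀ xb, HasFDerivAt f (f' x) x)
    (hcont : ContinuousOn (fun t : ℝ => f' (x₀ + t • (xb - x₀))) (Icc 0 1)) :
    f xb - f x₀ = (∫ t in (0 : ℝ)..1, f' (x₀ + t • (xb - x₀))) (xb - x₀) := by
  have hIcc : uIcc (0 : ℝ) 1 = Icc 0 1 := uIcc_of_le zero_le_one
  have hderiv : ∀ t ∈ uIcc (0 : ℝ) 1, HasDerivAt (fun t : ℝ => f (x₀ + t • (xb - x₀)))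
      (f' (x₀ + t • (xb - x₀)) (xb - x₀)) t := by
    intro t ht
    rw [hIcc] at ht
    have hpath : HasDerivAt (fun t : ℝ => x₀ + t • (xb - x₀)) (xb - x₀) t := by
      simpa using ((hasDerivAt_id t).smul_const (xb - x₀)).const_add x₀
    exact (hdiff _ (add_smul_sub_mem_segment x₀ xb ht)).comp_hasDerivAt t hpath
  have hint :
      IntervalIntegrable (fun t : ℝ => f' (x₀ + t • (xb - x₀))) MeasureTheory.volume 0 1 :=
    (hIcc ▸ hcont).intervalIntegrable
  rw [ContinuousLinearMap.intervalIntegral_apply hint,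
    integral_eq_sub_of_hasDerivAt hderiv
      ((hIcc ▸ hcont.clm_apply continuousOn_const).intervalIntegrable)]
  simp

theorem LipschitzOnWith.norm_integral_segment_sub_le {f' : E → E →L[ℝ] F} {K : NNReal}
    {x₀ xb : E} (hlip : LipschitzOnWith K f' (segment ℝ x₀ xb)) :
    ‖(∫ t in (0 : ℝ)..1, f' (x₀ + t • (xb - x₀))) - f' x₀‖ ≤ K / 2 * ‖xb - x₀‖ := by
  have hint :
      IntervalIntegrable (fun t : ℝ => f' (x₀ + t • (xb - x₀))) MeasureTheory.volume 0 1 :=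
    (uIcc_of_le (zero_le_one' ℝ) ▸ hlip.continuousOn_comp_segment).intervalIntegrable
  have hpointwise : ∀ t ∈ Icc (0 : ℝ) 1,
      ‖f' (x₀ + t • (xb - x₀)) - f' x₀‖ ≤ K * ‖xb - x₀‖ * t := by
    intro t ht
    calc ‖f' (x₀ + t • (xb - x₀)) - f' x₀‖
        ≤ K * ‖x₀ + t • (xb - x₀) - x₀‖ := hlip.norm_sub_le
          (add_smul_sub_mem_segment x₀ xb ht) (left_mem_segment ℝ x₀ xb)
      _ = K * ‖xb - x₀‖ * t := by
          rw [add_sub_cancel_left, norm_smul, Real.norm_of_nonneg ht.1]; ring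
  calc ‖(∫ t in (0 : ℝ)..1, f' (x₀ + t • (xb - x₀))) - f' x₀‖
      = ‖∫ t in (0 : ℝ)..1, (f' (x₀ + t • (xb - x₀)) - f' x₀)‖ := by
        rw [integral_sub hint intervalIntegrable_const, integral_const]; simp
    _ ≤ ∫ t in (0 : ℝ)..1, K * ‖xb - x₀‖ * t :=
        norm_integral_le_of_norm_le zero_le_one
          (MeasureTheory.ae_of_all _ fun t ht => hpointwise t (Ioc_subset_Icc_self ht))
          ((continuous_const_mul _).intervalIntegrable 0 1)
    _ = K / 2 * ‖xb - x₀‖ := by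
        rw [integral_const_mul, integral_id]; ring

end Segment

theorem ContinuousLinearMap.norm_adjoint_apply_le_add {𝕜 E F : Type*} [RCLike 𝕜]
    [NormedAddCommGroup E] [InnerProductSpace 𝕜 E] [CompleteSpace E]
    [NormedAddCommGroup F] [InnerProductSpace 𝕜 F] [CompleteSpace F]
    (A T : E →L[𝕜] F) (y : F) :
    ‖adjoint A y‖ ≤ ‖adjoint T y‖ + ‖T - A‖ * ‖y‖ :=
  calc ‖adjoint A y‖ ≤ ‖adjoint T y‖ + ‖adjoint T y - adjoint A y‖ := norm_le_insert _ _
    _ = ‖adjoint T y‖ + ‖adjoint (T - A) y‖ := by rw [map_sub, sub_apply]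
    _ ≤ ‖adjoint T y‖ + ‖T - A‖ * ‖y‖ := by
        grw [le_opNorm (adjoint (T - A)) y, LinearIsometryEquiv.norm_map]

theorem homotopy_operator_bounded_below_general
    (X Y : Type*) [NormedAddCommGroup X] [InnerProductSpace ℝ X] [CompleteSpace X]
    [NormedAddCommGroup Y] [InnerProductSpace ℝ Y] [CompleteSpace Y]
    (f : X → Y) (f' : X → X →L[ℝ] Y) (s : Set X)
    (x₀ xb : X) (ε L μ₀ : ℝ) (hL : 0 ≤ L)
    (hseg : segment ℝ x₀ xb ⊆ s)
    (hdiff : ∀ x ∈ s, HasFDerivAt f (f' x) x)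
    (hlip : ∀ x ∈ s, ∀ y ∈ s, ‖f' x - f' y‖ ≤ L * ‖x - y‖)
    (hadj : ∀ y : Y, μ₀ * ‖y‖ ≤ ‖ContinuousLinearMap.adjoint (f' x₀) y‖)
    (hdist : ‖xb - x₀‖ ≤ 2 * ε) :
    (∀ y : Y, (μ₀ - L * ε) * ‖y‖ ≤
        ‖ContinuousLinearMap.adjoint
          (∫ t in (0 : ℝ)..1, f' (x₀ + t • (xb - x₀))) y‖) ∧
      f xb - f x₀ = (∫ t in (0 : ℝ)..1, f' (x₀ + t • (xb - x₀))) (xb - x₀) := by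
  have hlipSeg : LipschitzOnWith L.toNNReal f' (segment ℝ x₀ xb) :=
    LipschitzOnWith.of_dist_le' fun x hx y hy => by
      simpa only [dist_eq_norm] using hlip x (hseg hx) y (hseg hy)
  have hclose : ‖(∫ t in (0 : ℝ)..1, f' (x₀ + t • (xb - x₀))) - f' x₀‖ ≤ L * ε := by
    calc _ ≤ L.toNNReal / 2 * ‖xb - x₀‖ := hlipSeg.norm_integral_segment_sub_le
      _ ≤ L / 2 * (2 * ε) := by rw [Real.coe_toNNReal L hL]; gcongr
      _ = L * ε := by ring
  refine ⟨fun y => ?_, sub_eq_integral_fderiv_segment_apply (fun x hx => hdiff x (hseg hx))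
    hlipSeg.continuousOn_comp_segment⟩
  have hperturb := ContinuousLinearMap.norm_adjoint_apply_le_add (f' x₀)
    (∫ t in (0 : ℝ)..1, f' (x₀ + t • (xb - x₀))) y
  have := mul_le_mul_of_nonneg_right hclose (norm_nonneg y)
  linarith [hadj y]

/-- Let `f : X → Y` (Hilbert spaces) be Fréchet differentiable on a convex set
containing the segment `[x₀, xb]`, with `L`-Lipschitz derivative map, and
suppose `‖(f'_{x₀})* y‖ ≥ μ₀‖y‖` for all `y`. If `‖xb - x₀‖ ≤ 2ε` and
`μ := μ₀ - Lε > 0`, then `T = ∫₀¹ f'_{x₀ + t(xb - x₀)} dt` satisfies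
`‖T* y‖ ≥ μ‖y‖` for all `y ∈ Y`, and `f xb - f x₀ = T (xb - x₀)`. -/
theorem homotopy_operator_bounded_below
    (X Y : Type*) [NormedAddCommGroup X] [InnerProductSpace ℝ X] [CompleteSpace X]
    [NormedAddCommGroup Y] [InnerProductSpace ℝ Y] [CompleteSpace Y]
    (f : X → Y) (f' : X → X →L[ℝ] Y) (s : Set X) (hs : Convex ℝ s)
    (x₀ xb : X) (ε L μ₀ : ℝ) (hε : 0 < ε) (hL : 0 ≤ L)
    (hseg : segment ℝ x₀ xb ⊆ s)
    (hdiff : ∀ x ∈ s, HasFDerivAt f (f' x) x)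
    (hlip : ∀ x ∈ s, ∀ y ∈ s, ‖f' x - f' y‖ ≤ L * ‖x - y‖)
    (hadj : ∀ y : Y, μ₀ * ‖y‖ ≤ ‖ContinuousLinearMap.adjoint (f' x₀) y‖)
    (hdist : ‖xb - x₀‖ ≤ 2 * ε) (hμ : 0 < μ₀ - L * ε) :
    (∀ y : Y, (μ₀ - L * ε) * ‖y‖ ≤
        ‖ContinuousLinearMap.adjoint
          (∫ t in (0 : ℝ)..1, f' (x₀ + t • (xb - x₀))) y‖) ∧
      f xb - f x₀ = (∫ t in (0 : ℝ)..1, f' (x₀ + t • (xb - x₀))) (xb - x₀) :=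
  homotopy_operator_bounded_below_general X Y f f' s x₀ xb ε L μ₀ hL hseg hdiff hlip hadj hdist
end
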